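/- arXiv:1503.01539 — 2 statements merged into one kernel-verified Lean document; each statement's English description precedes it below -/
import Mathlib

section
/- In a two-player network access game where each player's expected data rate is r_i(σ_j) = (1−σ_j)·R(1) + σ_j·R(2) with R(1) ≥ R(2) > 0, if (R(1) − R(2))/R(2)² < 1, then the best-response map of each player is a contraction on [0,1] with respect to the absolute value metric, and consequently the Nash equilibrium is unique. -/
/-!
On `[0, 1]` the expected rate `r(σ) = R₁ - σ (R₁ - R₂)` is at least `R₂`, so `σ ↦ 1 / r(σ)` has
derivative `(R₁ - R₂) / r(σ)²` of size at most `K = (R₁ - R₂) / R₂²`. Clamping to `[0, 1]` is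
1-Lipschitz, hence each best response is `K`-Lipschitz. Two equilibria `(a, b)`, `(a', b')` then
satisfy `|a - a'| ≤ K |b - b'| ≤ K² |a - a'|`, which forces equality when `K < 1`.
-/

theorem abs_min_max_sub_min_max_le {α : Type*} [AddCommGroup α] [LinearOrder α]
    [IsOrderedAddMonoid α] (lo hi x y : α) :
    |min hi (max x lo) - min hi (max y lo)| ≤ |x - y| :=
  calc |min hi (max x lo) - min hi (max y lo)|
      ≤ max |hi - hi| |max x lo - max y lo| := abs_min_sub_min_le_max _ _ _ _
    _ = |max x lo - max y lo| := by rw [sub_self, abs_zero, max_eq_right (abs_nonneg _)]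
    _ ≤ |x - y| := abs_max_sub_max_le_abs _ _ _

theorem eq_zero_of_le_mul_of_le_mul {α : Type*} [CommRing α] [LinearOrder α]
    [IsStrictOrderedRing α] {K x y : α} (hK₀ : 0 ≤ K) (hK₁ : K < 1) (hx : 0 ≤ x)
    (hxy : x ≤ K * y) (hyx : y ≤ K * x) : x = 0 := by
  have hx₂ : x ≤ K * (K * x) := hxy.trans (mul_le_mul_of_nonneg_left hyx hK₀)
  have hK₂ : K * K < 1 := by nlinarith
  by_contra hne
  have hxpos : 0 < x := lt_of_le_of_ne hx (Ne.symm hne)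
  linarith [mul_lt_mul_of_pos_right hK₂ hxpos]

namespace TwoPlayerAccess

variable (R₁ R₂ : ℝ)

def rate (σ : ℝ) : ℝ := (1 - σ) * R₁ + σ * R₂

noncomputable def bestResponse (ρ p σ : ℝ) : ℝ := min 1 (max (ρ / p - 1 / rate R₁ R₂ σ) 0)

variable {R₁ R₂}

theorem le_rate (hR : R₂ ≤ R₁) {σ : ℝ} (hσ : σ ≤ 1) : R₂ ≤ rate R₁ R₂ σ := by
  unfold rate; nlinarith

theorem abs_inv_rate_sub_inv_rate_le (hR₂ : 0 < R₂) (hR : R₂ ≤ R₁) {σ σ' : ℝ}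
    (hσ : σ ≤ 1) (hσ' : σ' ≤ 1) :
    |1 / rate R₁ R₂ σ - 1 / rate R₁ R₂ σ'| ≤ (R₁ - R₂) / R₂ ^ 2 * |σ - σ'| := by
  have hr := le_rate hR hσ
  have hr' := le_rate hR hσ'
  have hpos : 0 < rate R₁ R₂ σ := hR₂.trans_le hr
  have hpos' : 0 < rate R₁ R₂ σ' := hR₂.trans_le hr'
  have hdiff : 1 / rate R₁ R₂ σ - 1 / rate R₁ R₂ σ'
      = (σ - σ') * (R₁ - R₂) / (rate R₁ R₂ σ * rate R₁ R₂ σ') := by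
    rw [div_sub_div _ _ hpos.ne' hpos'.ne']; unfold rate; ring
  have hprod : R₂ ^ 2 ≤ rate R₁ R₂ σ * rate R₁ R₂ σ' := by
    rw [sq]; exact mul_le_mul hr hr' hR₂.le hpos.le
  rw [hdiff, abs_div, abs_mul, abs_of_nonneg (sub_nonneg.2 hR), abs_of_pos (mul_pos hpos hpos'),
    div_mul_eq_mul_div, mul_comm (R₁ - R₂)]
  exact div_le_div_of_nonneg_left (mul_nonneg (abs_nonneg _) (sub_nonneg.2 hR)) (by positivity)
    hprod

theorem abs_bestResponse_sub_le (hR₂ : 0 < R₂) (hR : R₂ ≤ R₁) (ρ p : ℝ) {σ σ' : ℝ}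
    (hσ : σ ≤ 1) (hσ' : σ' ≤ 1) :
    |bestResponse R₁ R₂ ρ p σ - bestResponse R₁ R₂ ρ p σ'| ≤ (R₁ - R₂) / R₂ ^ 2 * |σ - σ'| :=
  calc |bestResponse R₁ R₂ ρ p σ - bestResponse R₁ R₂ ρ p σ'|
      ≤ |(ρ / p - 1 / rate R₁ R₂ σ) - (ρ / p - 1 / rate R₁ R₂ σ')| :=
        abs_min_max_sub_min_max_le _ _ _ _
    _ = |1 / rate R₁ R₂ σ' - 1 / rate R₁ R₂ σ| := by rw [sub_sub_sub_cancel_left]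
    _ ≤ (R₁ - R₂) / R₂ ^ 2 * |σ' - σ| := abs_inv_rate_sub_inv_rate_le hR₂ hR hσ' hσ
    _ = (R₁ - R₂) / R₂ ^ 2 * |σ - σ'| := by rw [abs_sub_comm]

end TwoPlayerAccess

open TwoPlayerAccess in
theorem two_player_unique_NE_general (ρ₁ ρ₂ p R₁ R₂ : ℝ)
    (hR₂ : 0 < R₂) (hR : R₂ ≤ R₁)
    (hcond : (R₁ - R₂) / R₂ ^ 2 < 1)
    (BR₁ BR₂ : ℝ → ℝ)
    (hBR₁ : ∀ σ, BR₁ σ = min 1 (max (ρ₁ / p - 1 / ((1 - σ) * R₁ + σ * R₂)) 0))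
    (hBR₂ : ∀ σ, BR₂ σ = min 1 (max (ρ₂ / p - 1 / ((1 - σ) * R₁ + σ * R₂)) 0)) :
    (∀ σ ∈ Set.Icc (0:ℝ) 1, ∀ σ' ∈ Set.Icc (0:ℝ) 1,
        |BR₁ σ - BR₁ σ'| ≤ (R₁ - R₂) / R₂ ^ 2 * |σ - σ'| ∧
        |BR₂ σ - BR₂ σ'| ≤ (R₁ - R₂) / R₂ ^ 2 * |σ - σ'|) ∧
    (∀ a b a' b' : ℝ, a ∈ Set.Icc (0:ℝ) 1 → b ∈ Set.Icc (0:ℝ) 1 →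
        a' ∈ Set.Icc (0:ℝ) 1 → b' ∈ Set.Icc (0:ℝ) 1 →
        BR₁ b = a → BR₂ a = b → BR₁ b' = a' → BR₂ a' = b' →
        a = a' ∧ b = b') := by
  obtain rfl : BR₁ = bestResponse R₁ R₂ ρ₁ p := funext hBR₁
  obtain rfl : BR₂ = bestResponse R₁ R₂ ρ₂ p := funext hBR₂
  have lip : ∀ ρ, ∀ σ ∈ Set.Icc (0:ℝ) 1, ∀ σ' ∈ Set.Icc (0:ℝ) 1,
      |bestResponse R₁ R₂ ρ p σ - bestResponse R₁ R₂ ρ p σ'|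
        ≤ (R₁ - R₂) / R₂ ^ 2 * |σ - σ'| :=
    fun ρ σ hσ σ' hσ' => abs_bestResponse_sub_le hR₂ hR ρ p hσ.2 hσ'.2
  refine ⟨fun σ hσ σ' hσ' => ⟨lip ρ₁ σ hσ σ' hσ', lip ρ₂ σ hσ σ' hσ'⟩, ?_⟩
  intro a b a' b' ha hb ha' hb' h₁ h₂ h₁' h₂'
  have hK : 0 ≤ (R₁ - R₂) / R₂ ^ 2 := div_nonneg (sub_nonneg.2 hR) (sq_nonneg R₂)
  have hab : |a - a'| ≤ (R₁ - R₂) / R₂ ^ 2 * |b - b'| := by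
    rw [← h₁, ← h₁']; exact lip ρ₁ b hb b' hb'
  have hba : |b - b'| ≤ (R₁ - R₂) / R₂ ^ 2 * |a - a'| := by
    rw [← h₂, ← h₂']; exact lip ρ₂ a ha a' ha'
  refine ⟨?_, ?_⟩ <;> rw [← sub_eq_zero, ← abs_eq_zero]
  · exact eq_zero_of_le_mul_of_le_mul hK hcond (abs_nonneg _) hab hba
  · exact eq_zero_of_le_mul_of_le_mul hK hcond (abs_nonneg _) hba hab

theorem two_player_unique_NE (ρ₁ ρ₂ p R₁ R₂ : ℝ) (hρ₁ : 0 < ρ₁) (hρ₂ : 0 < ρ₂)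
    (hp : 0 < p) (hR₂ : 0 < R₂) (hR : R₂ ≤ R₁)
    (hcond : (R₁ - R₂) / R₂ ^ 2 < 1)
    (BR₁ BR₂ : ℝ → ℝ)
    (hBR₁ : ∀ σ, BR₁ σ = min 1 (max (ρ₁ / p - 1 / ((1 - σ) * R₁ + σ * R₂)) 0))
    (hBR₂ : ∀ σ, BR₂ σ = min 1 (max (ρ₂ / p - 1 / ((1 - σ) * R₁ + σ * R₂)) 0)) :
    (∀ σ ∈ Set.Icc (0:ℝ) 1, ∀ σ' ∈ Set.Icc (0:ℝ) 1,
        |BR₁ σ - BR₁ σ'| ≤ (R₁ - R₂) / R₂ ^ 2 * |σ - σ'| ∧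
        |BR₂ σ - BR₂ σ'| ≤ (R₁ - R₂) / R₂ ^ 2 * |σ - σ'|) ∧
    (∀ a b a' b' : ℝ, a ∈ Set.Icc (0:ℝ) 1 → b ∈ Set.Icc (0:ℝ) 1 →
        a' ∈ Set.Icc (0:ℝ) 1 → b' ∈ Set.Icc (0:ℝ) 1 →
        BR₁ b = a → BR₂ a = b → BR₁ b' = a' → BR₂ a' = b' →
        a = a' ∧ b = b') :=
  two_player_unique_NE_general ρ₁ ρ₂ p R₁ R₂ hR₂ hR hcond BR₁ BR₂ hBR₁ hBR₂
end

section
/- If all other users have connection probability σ ∈ [0,1] and R̄ is strictly decreasing with R̄(m) > 0, then the expected data rate r̄(σ) = Σ_{n=0}^{N−1} C(N−1,n)σⁿ(1−σ)^{N−1−n} R̄(n+1) is strictly decreasing in σ (for N ≥ 2). -/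
/-!
With `X ~ Binomial(n, x)`, the expected rate is `E[a X] = ∑ ν, a ν * b n ν x` for the Bernstein
basis `b n ν`. Since `b' (n+1) (ν+1) = (n+1) (b n ν - b n (ν+1))`, summation by parts shows that the
derivative of `∑ ν, a ν * b (n+1) ν` is `(n+1) ∑ ν, (a (ν+1) - a ν) * b n ν`; each `b n ν` is
positive on `(0, 1)`, so for strictly decreasing `a` the derivative is negative there.
-/

open Finset Polynomial

noncomputable def bernsteinSum (R : Type*) [CommRing R] (n : ℕ) (a : ℕ → R) : R[X] :=
  ∑ ν ∈ range (n + 1), C (a ν) * bernsteinPolynomial R n ν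

theorem derivative_bernsteinSum_succ {R : Type*} [CommRing R] (n : ℕ) (a : ℕ → R) :
    derivative (bernsteinSum R (n + 1) a) =
      (n + 1 : R[X]) * bernsteinSum R n (fun ν => a (ν + 1) - a ν) := by
  set b := bernsteinPolynomial R n
  have hshift : ∑ ν ∈ range (n + 1), C (a (ν + 1)) * b (ν + 1) =
      ∑ ν ∈ range (n + 1), C (a ν) * b ν - C (a 0) * b 0 := by
    have hlast : b (n + 1) = 0 := bernsteinPolynomial.eq_zero_of_lt R n.lt_succ_self
    rw [eq_sub_iff_add_eq, ← sum_range_succ' (fun ν => C (a ν) * b ν), sum_range_succ, hlast,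
      mul_zero, add_zero]
  have hparts : ∑ ν ∈ range (n + 1), C (a (ν + 1)) * (b ν - b (ν + 1)) - C (a 0) * b 0 =
      bernsteinSum R n (fun ν => a (ν + 1) - a ν) := by
    simp only [bernsteinSum, mul_sub, sub_mul, sum_sub_distrib, C_sub, hshift]
    ring
  rw [← hparts, mul_sub, mul_sum, sub_eq_add_neg]
  simp only [bernsteinSum, derivative_sum, derivative_mul, derivative_C, zero_mul, zero_add]
  rw [sum_range_succ', bernsteinPolynomial.derivative_zero]
  simp only [bernsteinPolynomial.derivative_succ, add_tsub_cancel_right, Nat.cast_add, Nat.cast_one]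
  exact congrArg₂ (· + ·) (sum_congr rfl fun ν _ => mul_left_comm _ _ _) (by ring)

theorem eval_bernsteinPolynomial_pos {n ν : ℕ} (hν : ν ≤ n) {x : ℝ} (hx : x ∈ Set.Ioo 0 1) :
    0 < (bernsteinPolynomial ℝ n ν).eval x := by
  have : 0 < 1 - x := sub_pos.2 hx.2
  have : 0 < x := hx.1
  have : 0 < (n.choose ν : ℝ) := Nat.cast_pos.2 (Nat.choose_pos hν)
  simp only [bernsteinPolynomial, eval_mul, eval_pow, eval_sub, eval_one, eval_X, eval_natCast]
  positivity

theorem strictAntiOn_eval_bernsteinSum {n : ℕ} (hn : n ≠ 0) {a : ℕ → ℝ} (ha : StrictAnti a) :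
    StrictAntiOn (fun x => (bernsteinSum ℝ n a).eval x) (Set.Icc 0 1) := by
  obtain ⟨m, rfl⟩ := Nat.exists_eq_succ_of_ne_zero hn
  refine strictAntiOn_of_deriv_neg (convex_Icc 0 1) (Polynomial.continuousOn _) fun x hx => ?_
  rw [interior_Icc] at hx
  rw [Polynomial.deriv, derivative_bernsteinSum_succ, eval_mul, bernsteinSum, eval_finsetSum]
  refine mul_neg_of_pos_of_neg (by simp only [eval_add, eval_natCast, eval_one]; positivity)
    (sum_neg (fun ν hν => ?_) nonempty_range_add_one)
  rw [eval_mul, eval_C]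
  exact mul_neg_of_neg_of_pos (sub_neg.2 (ha ν.lt_succ_self))
    (eval_bernsteinPolynomial_pos (mem_range_succ_iff.1 hν) hx)

theorem expected_rate_strict_anti_general (N : ℕ) (hN : 2 ≤ N)
    (R : ℕ → ℝ) (hR : StrictAnti R) :
    StrictAntiOn
      (fun σ : ℝ => ∑ n ∈ Finset.range N,
        ((N - 1).choose n : ℝ) * σ ^ n * (1 - σ) ^ (N - 1 - n) * R (n + 1))
      (Set.Icc 0 1) := by
  obtain ⟨M, rfl⟩ : ∃ M, N = M + 1 := ⟨N - 1, by omega⟩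
  have hRshift : StrictAnti (fun n => R (n + 1)) := fun i j hij => hR (Nat.succ_lt_succ hij)
  convert strictAntiOn_eval_bernsteinSum (by omega : M ≠ 0) hRshift using 2 with σ
  simp [bernsteinSum, bernsteinPolynomial, eval_finsetSum, mul_comm]

theorem expected_rate_strict_anti (N : ℕ) (hN : 2 ≤ N)
    (R : ℕ → ℝ) (hRpos : ∀ m, 0 < R m) (hR : StrictAnti R) :
    StrictAntiOn
      (fun σ : ℝ => ∑ n ∈ Finset.range N,
        ((N - 1).choose n : ℝ) * σ ^ n * (1 - σ) ^ (N - 1 - n) * R (n + 1))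
      (Set.Icc 0 1) :=
  expected_rate_strict_anti_general N hN R hR
end
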